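/- arXiv:math/0609441 — 3 statements merged into one kernel-verified Lean document; each statement's English description precedes it below -/
import Mathlib

section
/- Let p, q > 0 with p^(-l) ≠ q^l, let α, β, l be real with α ≠ 0 and k := l/α, and let f : ℝ → ℝ be differentiable. Then for every z > 0, the operators N = α z d/dz and a = D satisfy [N, a] f (z) = −l · (D f)(z); explicitly, α · z · (d/dz)[(f(p^(-α) w) p^(-β) − f(q^(α) w) q^(β)) / ((p^(-l) − q^l) w^k)]|_{w=z} − (p^(-β) · α · (p^(-α) z) · f′(p^(-α) z) − q^(β) · α · (q^(α) z) · f′(q^(α) z)) / ((p^(-l) − q^l) z^k) = −l · (f(p^(-α) z) p^(-β) − f(q^(α) z) q^(β)) / ((p^(-l) − q^l) z^k), where z^k denotes the real power. -/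
/-!
The Euler operator `z d/dz` commutes with every dilation `w ↦ a w`, so applied to the numerator
of `D f` it gives exactly the numerator of `D (N f) / α`. On the factor `w ^ (-k)` it acts as
multiplication by `-k`, so `[N, D] f = -α k · D f = -l · D f`.
-/

theorem mul_deriv_div_const_mul_rpow {g : ℝ → ℝ} {z : ℝ} (hg : DifferentiableAt ℝ g z)
    (hz : 0 < z) (c k : ℝ) :
    z * deriv (fun w => g w / (c * w ^ k)) z = (z * deriv g z - k * g z) / (c * z ^ k) := by
  have hzk : z ^ k ≠ 0 := (Real.rpow_pos_of_pos hz k).ne'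
  have hquot : HasDerivAt (fun w => g w / w ^ k)
      ((deriv g z * z ^ k - g z * (k * z ^ (k - 1))) / (z ^ k) ^ 2) z :=
    hg.hasDerivAt.div (Real.hasDerivAt_rpow_const (Or.inl hz.ne')) hzk
  have hfun : (fun w => g w / (c * w ^ k)) = fun w => c⁻¹ * (g w / w ^ k) := by
    funext w
    ring
  rw [hfun, deriv_const_mul_field, hquot.deriv, Real.rpow_sub_one hz.ne']
  field_simp

theorem commutator_N_a_general (p q α β l : ℝ)
    (hα : α ≠ 0) (k : ℝ) (hk : k = l / α)
    (f : ℝ → ℝ) (hf : Differentiable ℝ f) (z : ℝ) (hz : 0 < z) :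
    α * z * deriv (fun w =>
        (f (p ^ (-α) * w) * p ^ (-β) - f (q ^ α * w) * q ^ β) /
          ((p ^ (-l) - q ^ l) * w ^ k)) z -
      (p ^ (-β) * α * (p ^ (-α) * z) * deriv f (p ^ (-α) * z) -
          q ^ β * α * (q ^ α * z) * deriv f (q ^ α * z)) /
        ((p ^ (-l) - q ^ l) * z ^ k) =
    -l * ((f (p ^ (-α) * z) * p ^ (-β) - f (q ^ α * z) * q ^ β) /
        ((p ^ (-l) - q ^ l) * z ^ k)) := by
  rw [mul_assoc α, mul_deriv_div_const_mul_rpow (by fun_prop) hz,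
    deriv_fun_sub (by fun_prop) (by fun_prop), deriv_mul_const_field, deriv_mul_const_field,
    deriv_comp_mul_left, deriv_comp_mul_left, smul_eq_mul, smul_eq_mul]
  have hl : α * k = l := by rw [hk, mul_div_cancel₀ l hα]
  linear_combination
    -((f (p ^ (-α) * z) * p ^ (-β) - f (q ^ α * z) * q ^ β) / ((p ^ (-l) - q ^ l) * z ^ k)) * hl

/-- The commutation relation `[N, a] f = -l · (D f)` for the number operator
`N = α z d/dz` and the annihilation operator `a = D`, the `(p,q;α,β,l)`-difference
derivative. -/
theorem commutator_N_a (p q α β l : ℝ) (hp : 0 < p) (hq : 0 < q)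
    (hα : α ≠ 0) (h : p ^ (-l) ≠ q ^ l) (k : ℝ) (hk : k = l / α)
    (f : ℝ → ℝ) (hf : Differentiable ℝ f) (z : ℝ) (hz : 0 < z) :
    α * z * deriv (fun w =>
        (f (p ^ (-α) * w) * p ^ (-β) - f (q ^ α * w) * q ^ β) /
          ((p ^ (-l) - q ^ l) * w ^ k)) z -
      (p ^ (-β) * α * (p ^ (-α) * z) * deriv f (p ^ (-α) * z) -
          q ^ β * α * (q ^ α * z) * deriv f (q ^ α * z)) /
        ((p ^ (-l) - q ^ l) * z ^ k) =
    -l * ((f (p ^ (-α) * z) * p ^ (-β) - f (q ^ α * z) * q ^ β) /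
        ((p ^ (-l) - q ^ l) * z ^ k)) :=
  commutator_N_a_general p q α β l hα k hk f hf z hz
end

section
/- Let p, q > 0 with p^(-l) ≠ q^l, let α, β, l be real with α ≠ 0, set k = l/α, and let f : ℝ → ℝ. Then for every z > 0 the relation a a⁺ − q^l a⁺ a = p^(−αN−β) holds pointwise: D(w ↦ w^k f(w))(z) − q^l · z^k · (D f)(z) = p^(-β) · f(p^(-α) z), where (D g)(z) = (g(p^(-α) z) p^(-β) − g(q^α z) q^β) / ((p^(-l) − q^l) z^k) and all powers are real powers. -/
/-- The relation `a a⁺ − q^l a⁺ a = p^(−αN−β)` holds pointwise in the realization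
by difference operators. -/
theorem relation_q (p q α β l : ℝ) (hp : 0 < p) (hq : 0 < q)
    (hα : α ≠ 0) (h : p ^ (-l) ≠ q ^ l) (k : ℝ) (hk : k = l / α)
    (f : ℝ → ℝ)
    (D : (ℝ → ℝ) → ℝ → ℝ)
    (hD : ∀ (g : ℝ → ℝ) (w : ℝ), D g w =
      (g (p ^ (-α) * w) * p ^ (-β) - g (q ^ α * w) * q ^ β) /
        ((p ^ (-l) - q ^ l) * w ^ k))
    (z : ℝ) (hz : 0 < z) :
    D (fun w => w ^ k * f w) z - q ^ l * (z ^ k * D f z) =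
      p ^ (-β) * f (p ^ (-α) * z) := by
  have hαk : α * k = l := by rw [hk]; field_simp
  have hpk : (p ^ (-α) * z) ^ k = p ^ (-l) * z ^ k := by
    rw [Real.mul_rpow (Real.rpow_nonneg hp.le _) hz.le, ← Real.rpow_mul hp.le,
      neg_mul, hαk]
  have hqk : (q ^ α * z) ^ k = q ^ l * z ^ k := by
    rw [Real.mul_rpow (Real.rpow_nonneg hq.le _) hz.le, ← Real.rpow_mul hq.le, hαk]
  have hzk : z ^ k ≠ 0 := (Real.rpow_pos_of_pos hz k).ne'
  have hd : p ^ (-l) - q ^ l ≠ 0 := sub_ne_zero.mpr h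
  rw [hD, hD]
  simp only [hpk, hqk]
  field_simp
  ring
end

section
/- Let p, q > 0 with p^(-l) ≠ q^l, let α, β, l be real with α ≠ 0, set k = l/α, and let f : ℝ → ℝ. Then for every z > 0 the relation a a⁺ − p^(-l) a⁺ a = q^(αN+β) holds pointwise: D(w ↦ w^k f(w))(z) − p^(-l) · z^k · (D f)(z) = q^(β) · f(q^(α) z), where (D g)(z) = (g(p^(-α) z) p^(-β) − g(q^α z) q^β) / ((p^(-l) − q^l) z^k) and all powers are real powers. -/
/-! The weight `w ^ k` is a joint eigenfunction of the two dilations in `D`: since `α * k = l`,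
`w ↦ p ^ (-α) * w` multiplies it by `p ^ (-l)` and `w ↦ q ^ α * w` by `q ^ l`. Pulling these
eigenvalues out, the `p`-terms of the two sides cancel and the `q`-terms combine with the factor
`(p ^ (-l) - q ^ l) / (p ^ (-l) - q ^ l) = 1`. -/

theorem Real.rpow_mul_rpow_mul {a z : ℝ} (ha : 0 ≤ a) (hz : 0 ≤ z) (c k : ℝ) :
    (a ^ c * z) ^ k = a ^ (c * k) * z ^ k := by
  rw [Real.mul_rpow (Real.rpow_nonneg ha c) hz, ← Real.rpow_mul ha]

theorem sub_mul_div_sub_mul_cancel {P Q Z u v s t : ℝ} (hPQ : P - Q ≠ 0) (hZ : Z ≠ 0) :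
    (P * Z * u * s - Q * Z * v * t) / ((P - Q) * Z) - P * (Z * ((u * s - v * t) / ((P - Q) * Z))) =
      t * v := by
  field_simp
  ring

/-- The relation `a a⁺ − p^(-l) a⁺ a = q^(αN+β)` holds pointwise in the realization
by difference operators. -/
theorem relation_p (p q α β l : ℝ) (hp : 0 < p) (hq : 0 < q)
    (hα : α ≠ 0) (h : p ^ (-l) ≠ q ^ l) (k : ℝ) (hk : k = l / α)
    (f : ℝ → ℝ)
    (D : (ℝ → ℝ) → ℝ → ℝ)
    (hD : ∀ (g : ℝ → ℝ) (w : ℝ), D g w =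
      (g (p ^ (-α) * w) * p ^ (-β) - g (q ^ α * w) * q ^ β) /
        ((p ^ (-l) - q ^ l) * w ^ k))
    (z : ℝ) (hz : 0 < z) :
    D (fun w => w ^ k * f w) z - p ^ (-l) * (z ^ k * D f z) =
      q ^ β * f (q ^ α * z) := by
  have hαk : α * k = l := by rw [hk, mul_div_cancel₀ l hα]
  have hp_dil : (p ^ (-α) * z) ^ k = p ^ (-l) * z ^ k := by
    rw [Real.rpow_mul_rpow_mul hp.le hz.le, neg_mul, hαk]
  have hq_dil : (q ^ α * z) ^ k = q ^ l * z ^ k := by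
    rw [Real.rpow_mul_rpow_mul hq.le hz.le, hαk]
  rw [hD, hD, hp_dil, hq_dil]
  exact sub_mul_div_sub_mul_cancel (sub_ne_zero.mpr h) (Real.rpow_pos_of_pos hz k).ne'
end
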